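/- Let n ∈ ℕ, let a_1,…,a_n ∈ ℂ with |a_j| > 1 for all j, let w(z) = ∏_{j=1}^n (z − a_j) and let B be the associated Blaschke product. Let 0 < k ≤ 1, let s, m ∈ ℕ with s ≤ m ≤ n, let p be a complex polynomial of degree exactly m all of whose zeros lie in the closed disk {z : |z| ≤ k} and having a zero of multiplicity (at least) s at the origin, and set r(z) = p(z)/w(z). Then for every z ∈ ℂ with |z| = 1, |r′(z)| ≥ (1/2) · { |B′(z)| − n + 2(m + s·k)/(1 + k) } · |r(z)|. -/

import Mathlib

open Complex Polynomial

lemma aux_re_div {z c : ℂ} (hz : Complex.normSq z = 1) (h : z ≠ c) :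
    (z / (z - c)).re = (1 - (z * (starRingEnd ℂ) c).re) / Complex.normSq (z - c) := by
  have hzc : z - c ≠ 0 := sub_ne_zero.2 h
  have hN : Complex.normSq (z - c) ≠ 0 := fun h => hzc (Complex.normSq_eq_zero.mp h)
  have h1 : z / (z - c) = (1 - z * (starRingEnd ℂ) c) * (((Complex.normSq (z - c))⁻¹ : ℝ) : ℂ) := by
    rw [div_eq_mul_inv, Complex.inv_def, Complex.ofReal_inv]
    have : z * (starRingEnd ℂ) (z - c) = 1 - z * (starRingEnd ℂ) c := by
      rw [map_sub, mul_sub, Complex.mul_conj, hz, Complex.ofReal_one]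
    rw [← mul_assoc, this]
  rw [h1, Complex.mul_re]
  simp only [Complex.ofReal_re, Complex.ofReal_im, mul_zero, sub_zero, Complex.sub_re,
    Complex.one_re, div_eq_mul_inv]

lemma aux_root_bound {k : ℝ} (hk0 : 0 < k) (hk1 : k ≤ 1) {z t : ℂ}
    (hz : ‖z‖ = 1) (ht : ‖t‖ ≤ k) (hzt : z ≠ t) :
    1 / (1 + k) + (if t = 0 then k / (1 + k) else 0) ≤ (z / (z - t)).re := by
  have hz2 : Complex.normSq z = 1 := by rw [← Complex.sq_norm, hz]; norm_num
  have hk1' : (0:ℝ) < 1 + k := by linarith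
  by_cases ht0 : t = 0
  · subst ht0
    have hz0 : z ≠ 0 := by
      intro h; rw [h] at hz; simp at hz
    rw [if_pos rfl, sub_zero, div_self hz0]
    have : 1 / (1 + k) + k / (1 + k) = 1 := by field_simp
    rw [this]; simp
  · rw [if_neg ht0, add_zero, aux_re_div hz2 hzt]
    set b := ‖t‖ with hb
    set u := (z * (starRingEnd ℂ) t).re with hu
    have hub : |u| ≤ b := by
      calc |u| ≤ ‖z * (starRingEnd ℂ) t‖ := Complex.abs_re_le_norm _
        _ = b := by rw [norm_mul, Complex.norm_conj, hz, one_mul]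
    have hub1 : -b ≤ u := neg_le_of_abs_le hub
    have hub2 : u ≤ b := le_of_abs_le hub
    have hb0 : 0 ≤ b := norm_nonneg t
    have hNval : Complex.normSq (z - t) = 1 + b ^ 2 - 2 * u := by
      rw [Complex.normSq_sub, hz2, ← Complex.sq_norm t]
    have hNpos : 0 < Complex.normSq (z - t) :=
      Complex.normSq_pos.2 (sub_ne_zero.2 hzt)
    rw [div_le_div_iff₀ hk1' hNpos, hNval]
    nlinarith [mul_nonneg (sub_nonneg.2 ht) (by linarith : (0:ℝ) ≤ 1 + b),
      mul_nonneg (sub_nonneg.2 hk1) (by linarith : (0:ℝ) ≤ u + b)]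

lemma aux_sum_ite (c : ℝ) (s : Multiset ℂ) :
    (s.map fun t => if t = 0 then c else 0).sum = (s.count 0) * c := by
  induction s using Multiset.induction_on with
  | empty => simp
  | cons a s ih =>
    simp only [Multiset.map_cons, Multiset.sum_cons, ih, Multiset.count_cons]
    by_cases h : a = 0
    · subst h; simp [add_mul]; ring
    · simp [h, Ne.symm h]

theorem turan_rational_sfold_zero_in_disk
    (n : ℕ) (a : Fin n → ℂ) (ha : ∀ j, 1 < ‖a j‖)
    (w B : ℂ → ℂ)
    (hw : ∀ z, w z = ∏ j, (z - a j))
    (hB : ∀ z, B z = ∏ j, (1 - (starRingEnd ℂ) (a j) * z) / (z - a j))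
    (k : ℝ) (hk0 : 0 < k) (hk1 : k ≤ 1)
    (s m : ℕ) (hsm : s ≤ m) (hmn : m ≤ n)
    (p : Polynomial ℂ) (hp0 : p ≠ 0) (hdeg : p.natDegree = m)
    (hzeros : ∀ z : ℂ, p.IsRoot z → ‖z‖ ≤ k)
    (hs : X ^ s ∣ p)
    (r : ℂ → ℂ) (hr : ∀ z, r z = p.eval z / w z)
    (z : ℂ) (hz : ‖z‖ = 1) :
    ‖deriv r z‖ ≥
      (1 / 2) * (‖deriv B z‖ - (n : ℝ)
        + 2 * ((m : ℝ) + (s : ℝ) * k) / (1 + k))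
        * ‖r z‖ := by
  have hz2 : Complex.normSq z = 1 := by rw [← Complex.sq_norm, hz]; norm_num
  have hzc : z * (starRingEnd ℂ) z = 1 := by rw [Complex.mul_conj, hz2, Complex.ofReal_one]
  have hzane : ∀ j, z ≠ a j := by
    intro j h
    have h1 := ha j
    rw [← h, hz] at h1
    exact lt_irrefl _ h1
  have hza : ∀ j, z - a j ≠ 0 := fun j => sub_ne_zero.2 (hzane j)
  -- the real quantities
  set t : Fin n → ℝ := fun j => (Complex.normSq (a j) - 1) / Complex.normSq (z - a j) with htdef
  set S : ℝ := ∑ j, t j with hSdef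
  have htpos : ∀ j, 0 ≤ t j := by
    intro j
    apply div_nonneg
    · have := ha j
      have : 1 < Complex.normSq (a j) := by
        rw [← Complex.sq_norm]; nlinarith [norm_nonneg (a j)]
      linarith
    · exact Complex.normSq_nonneg _
  have hSpos : 0 ≤ S := Finset.sum_nonneg fun j _ => htpos j
  -- conjugate trick
  have hconj : ∀ j, 1 - (starRingEnd ℂ) (a j) * z = z * (starRingEnd ℂ) (z - a j) := by
    intro j
    rw [map_sub, mul_sub, hzc, mul_comm]
  -- Blaschke factors
  set f : Fin n → ℂ → ℂ := fun j x => (1 - (starRingEnd ℂ) (a j) * x) / (x - a j) with hfdef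
  have hfd : ∀ j, HasDerivAt (f j)
      (((Complex.normSq (a j) : ℂ) - 1) / (z - a j) ^ 2) z := by
    intro j
    have h1 : HasDerivAt (fun x : ℂ => 1 - (starRingEnd ℂ) (a j) * x)
        (-(starRingEnd ℂ) (a j)) z := by
      simpa using ((hasDerivAt_id z).const_mul ((starRingEnd ℂ) (a j))).const_sub 1
    have h2 : HasDerivAt (fun x : ℂ => x - a j) 1 z := (hasDerivAt_id z).sub_const _
    have := h1.div h2 (hza j)
    refine this.congr_deriv ?_
    have hma : (starRingEnd ℂ) (a j) * (a j) = (Complex.normSq (a j) : ℂ) := by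
      rw [mul_comm, Complex.mul_conj]
    rw [show -(starRingEnd ℂ) (a j) * (z - a j) - (1 - (starRingEnd ℂ) (a j) * z) * 1
      = (Complex.normSq (a j) : ℂ) - 1 from by linear_combination hma]
  have hkey : ∀ j, z * (((Complex.normSq (a j) : ℂ) - 1) / (z - a j) ^ 2)
      = (t j : ℂ) * f j z := by
    intro j
    have hmc : (z - a j) * (starRingEnd ℂ) (z - a j) = (Complex.normSq (z - a j) : ℂ) :=
      Complex.mul_conj _
    have hN : (Complex.normSq (z - a j) : ℂ) ≠ 0 := by
      rw [Complex.ofReal_ne_zero]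
      exact fun h => (hza j) (Complex.normSq_eq_zero.mp h)
    simp only [hfdef, htdef]
    rw [hconj j]
    push_cast
    rw [← mul_div_assoc, div_mul_div_comm,
      div_eq_div_iff (pow_ne_zero 2 (hza j)) (mul_ne_zero hN (hza j))]
    linear_combination (-(z * ((Complex.normSq (a j) : ℂ) - 1) * (z - a j))) * hmc
  have hBd : HasDerivAt B (∑ i, (∏ j ∈ Finset.univ.erase i, f j z) •
      (((Complex.normSq (a i) : ℂ) - 1) / (z - a i) ^ 2)) z := by
    have : B = fun x => ∏ j, f j x := by funext x; rw [hB x]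
    rw [this]
    exact HasDerivAt.fun_finsetProd fun i _ => hfd i
  have hBz : B z = ∏ j, f j z := by rw [hB z]
  have hzB : z * deriv B z = (S : ℂ) * B z := by
    rw [hBd.deriv, Finset.mul_sum]
    have : ∀ i ∈ Finset.univ, z * ((∏ j ∈ Finset.univ.erase i, f j z) •
        (((Complex.normSq (a i) : ℂ) - 1) / (z - a i) ^ 2))
        = (t i : ℂ) * B z := by
      intro i _
      rw [smul_eq_mul, mul_comm (∏ j ∈ Finset.univ.erase i, f j z), ← mul_assoc, hkey i,
        mul_assoc, mul_comm (f i z), ← mul_assoc, mul_assoc,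
        Finset.prod_erase_mul _ _ (Finset.mem_univ i), ← hBz]
    rw [Finset.sum_congr rfl this, ← Finset.sum_mul, hSdef]
    push_cast
    rfl
  have habsf : ∀ j, ‖f j z‖ = 1 := by
    intro j
    simp only [hfdef]
    rw [hconj j, norm_div, norm_mul, Complex.norm_conj, hz, one_mul, div_self]
    exact norm_ne_zero_iff.mpr (hza j)
  have habsB : ‖B z‖ = 1 := by
    rw [hBz, norm_prod]
    simp [habsf]
  have habsB' : ‖deriv B z‖ = S := by
    have h1 : ‖z * deriv B z‖ = ‖deriv B z‖ := by
      rw [norm_mul, hz, one_mul]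
    rw [← h1, hzB, norm_mul, habsB, mul_one, Complex.norm_real, Real.norm_of_nonneg hSpos]
  -- the w part
  have hwd : HasDerivAt w (∑ i, ∏ j ∈ Finset.univ.erase i, (z - a j)) z := by
    have : w = fun x => ∏ j, (x - a j) := by funext x; rw [hw x]
    rw [this]
    have := HasDerivAt.fun_finsetProd (u := Finset.univ)
      (f := fun (j : Fin n) (x : ℂ) => x - a j) (f' := fun _ => 1) (x := z)
      (fun i _ => (hasDerivAt_id z).sub_const _)
    simpa using this
  have hwz : w z ≠ 0 := by
    rw [hw z]
    exact Finset.prod_ne_zero_iff.2 fun j _ => hza j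
  have hrew : z * deriv w z / w z = ∑ j, z / (z - a j) := by
    rw [hwd.deriv, Finset.mul_sum, hw z, Finset.sum_div]
    apply Finset.sum_congr rfl
    intro j _
    rw [← Finset.prod_erase_mul _ _ (Finset.mem_univ j), mul_comm (∏ x ∈ Finset.univ.erase j, (z - a x)) (z - a j),
      mul_comm z (∏ x ∈ Finset.univ.erase j, (z - a x))]
    rw [mul_comm (z - a j) (∏ x ∈ Finset.univ.erase j, (z - a x))]
    exact mul_div_mul_left _ _ (Finset.prod_ne_zero_iff.2 fun i _ => hza i)
  have hre_w : (z * deriv w z / w z).re = ((n : ℝ) - S) / 2 := by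
    rw [hrew, Complex.re_sum]
    have hterm : ∀ j ∈ Finset.univ, (z / (z - a j)).re = (1 - t j) / 2 := by
      intro j _
      rw [aux_re_div hz2 (hzane j)]
      have hN : Complex.normSq (z - a j) ≠ 0 :=
        fun h => (hza j) (Complex.normSq_eq_zero.mp h)
      have hNval : Complex.normSq (z - a j)
          = 1 + Complex.normSq (a j) - 2 * (z * (starRingEnd ℂ) (a j)).re := by
        rw [Complex.normSq_sub, hz2]
      have hu : (z * (starRingEnd ℂ) (a j)).re = z.re * (a j).re + z.im * (a j).im := by
        simp [Complex.mul_re]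
      simp only [htdef]
      field_simp
      linear_combination (-1 : ℝ) * hNval
    rw [Finset.sum_congr rfl hterm, ← Finset.sum_div]
    congr 1
    rw [Finset.sum_sub_distrib, Finset.sum_const, Finset.card_univ, Fintype.card_fin]
    simp [hSdef]
  -- polynomial part
  classical
  have hsplits : p.Splits := IsAlgClosed.splits p
  set c : ℂ := p.leadingCoeff with hcdef
  have hc0 : c ≠ 0 := Polynomial.leadingCoeff_ne_zero.2 hp0
  set q : Polynomial ℂ := (Multiset.map (fun a => X - C a) p.roots).prod with hqdef
  have hfact : p = C c * q := hsplits.eq_prod_roots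
  have hcard : Multiset.card p.roots = m := by
    rw [← hdeg]; exact Polynomial.splits_iff_card_roots.mp hsplits
  have hcount : s ≤ p.roots.count 0 := by
    rw [Polynomial.count_roots]
    rw [Polynomial.le_rootMultiplicity_iff hp0]
    simpa using hs
  have hroot_abs : ∀ u ∈ p.roots, ‖u‖ ≤ k := fun u hu =>
    hzeros u (Polynomial.isRoot_of_mem_roots hu)
  by_cases hpz : p.eval z = 0
  · -- degenerate case : r z = 0
    have : r z = 0 := by rw [hr z, hpz, zero_div]
    rw [this, norm_zero, mul_zero]
    exact norm_nonneg _
  · have hqevz : q.eval z = (Multiset.map (fun u => z - u) p.roots).prod := by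
      rw [hqdef, Polynomial.eval_multiset_prod, Multiset.map_map]
      congr 1
      apply Multiset.map_congr rfl
      intro x _
      simp
    have hqz : q.eval z ≠ 0 := by
      intro h
      apply hpz
      rw [hfact, Polynomial.eval_mul, Polynomial.eval_C, h, mul_zero]
    have hzru : ∀ u ∈ p.roots, z ≠ u := by
      intro u hu h
      apply hqz
      rw [hqevz]
      exact Multiset.prod_eq_zero (Multiset.mem_map.2 ⟨u, hu, by rw [← h, sub_self]⟩)
    have hzu : ∀ u ∈ p.roots, z - u ≠ 0 := fun u hu => sub_ne_zero.2 (hzru u hu)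
    -- logarithmic derivative of q
    have hq'ev : (Polynomial.derivative q).eval z
        = (Multiset.map (fun u => (Multiset.map (fun v => z - v) (p.roots.erase u)).prod) p.roots).sum := by
      rw [hqdef, Polynomial.derivative_prod]
      rw [show ∀ (M : Multiset (Polynomial ℂ)), Polynomial.eval z M.sum
          = (M.map (Polynomial.eval z)).sum from fun M => by
        simpa using map_multiset_sum (Polynomial.evalRingHom z) M]
      rw [Multiset.map_map]
      congr 1
      apply Multiset.map_congr rfl
      intro x hx
      simp only [Function.comp_apply, Polynomial.derivative_sub, Polynomial.derivative_X,
        Polynomial.derivative_C, sub_zero, mul_one, Polynomial.eval_mul, Polynomial.eval_one,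
        Polynomial.eval_multiset_prod, Multiset.map_map]
      exact congrArg Multiset.prod (Multiset.map_congr rfl fun y _ => by simp)
    have hsum_q : z * (Polynomial.derivative q).eval z / q.eval z
        = (Multiset.map (fun u => z / (z - u)) p.roots).sum := by
      rw [eq_comm, eq_div_iff hqz, hq'ev, ← Multiset.sum_map_mul_right,
        ← Multiset.sum_map_mul_left]
      refine congrArg Multiset.sum (Multiset.map_congr rfl ?_)
      intro u hu
      have hq2 : q.eval z
          = (z - u) * (Multiset.map (fun v => z - v) (p.roots.erase u)).prod := by
        rw [hqevz, ← Multiset.prod_map_erase (f := fun v => z - v) hu]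
      rw [hq2, div_mul_eq_mul_div,
        mul_comm (z - u) ((Multiset.map (fun v => z - v) (p.roots.erase u)).prod),
        ← mul_assoc, mul_div_cancel_right₀ _ (hzu u hu)]
    -- lower bound on the real part
    have hre_p : ((m : ℝ) + (s : ℝ) * k) / (1 + k)
        ≤ (z * (Polynomial.derivative p).eval z / p.eval z).re := by
      have hP' : Polynomial.derivative p = C c * Polynomial.derivative q := by
        rw [hfact, Polynomial.derivative_C_mul]
      have hcancel : z * (Polynomial.derivative p).eval z / p.eval z
          = z * (Polynomial.derivative q).eval z / q.eval z := by
        rw [hP', hfact, Polynomial.eval_mul, Polynomial.eval_mul, Polynomial.eval_C]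
        rw [show z * (c * (Polynomial.derivative q).eval z) = (z * (Polynomial.derivative q).eval z) * c by ring,
          show c * q.eval z = q.eval z * c by ring,
          mul_div_mul_right _ _ hc0]
      rw [hcancel, hsum_q]
      have hresum : ((Multiset.map (fun u => z / (z - u)) p.roots).sum).re
          = (Multiset.map (fun u => (z / (z - u)).re) p.roots).sum := by
        rw [show ((Multiset.map (fun u => z / (z - u)) p.roots).sum).re
            = Complex.reAddGroupHom ((Multiset.map (fun u => z / (z - u)) p.roots).sum) from rfl,
          AddMonoidHom.map_multiset_sum, Multiset.map_map]
        rfl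
      rw [hresum]
      have hlow : (Multiset.map (fun u : ℂ => 1 / (1 + k) + (if u = 0 then k / (1 + k) else 0)) p.roots).sum
          ≤ (Multiset.map (fun u => (z / (z - u)).re) p.roots).sum := by
        apply Multiset.sum_map_le_sum_map
        intro u hu
        exact aux_root_bound hk0 hk1 hz (hroot_abs u hu) (hzru u hu)
      refine le_trans ?_ hlow
      rw [Multiset.sum_map_add, aux_sum_ite]
      have h1 : (Multiset.map (fun _ : ℂ => 1 / (1 + k)) p.roots).sum
          = (m : ℝ) * (1 / (1 + k)) := by
        rw [Multiset.map_const', Multiset.sum_replicate, hcard, nsmul_eq_mul]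
      rw [h1]
      have hk1' : (0:ℝ) < 1 + k := by linarith
      have h2 : (s : ℝ) * (k / (1 + k)) ≤ (p.roots.count 0 : ℝ) * (k / (1 + k)) := by
        apply mul_le_mul_of_nonneg_right _ (by positivity)
        exact_mod_cast hcount
      calc ((m : ℝ) + (s : ℝ) * k) / (1 + k)
          = (m : ℝ) * (1 / (1 + k)) + (s : ℝ) * (k / (1 + k)) := by field_simp
        _ ≤ (m : ℝ) * (1 / (1 + k)) + (p.roots.count 0 : ℝ) * (k / (1 + k)) := by linarith
    -- derivative of r
    have hrz : r z ≠ 0 := by rw [hr z]; exact div_ne_zero hpz hwz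
    have hrd : HasDerivAt r
        (((Polynomial.derivative p).eval z * w z - p.eval z * deriv w z) / (w z) ^ 2) z := by
      have : r = fun x => p.eval x / w x := by funext x; rw [hr x]
      rw [this]
      have hwd' : HasDerivAt w (deriv w z) z := hwd.differentiableAt.hasDerivAt
      exact (Polynomial.hasDerivAt p z).div hwd' hwz
    have hlog : z * deriv r z / r z
        = z * (Polynomial.derivative p).eval z / p.eval z - z * deriv w z / w z := by
      rw [hrd.deriv, hr z]
      field_simp
    -- conclusion
    have hre : ((S - (n : ℝ)) / 2 + ((m : ℝ) + (s : ℝ) * k) / (1 + k))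
        ≤ (z * deriv r z / r z).re := by
      rw [hlog, Complex.sub_re, hre_w]
      have := hre_p
      linarith
    have habsr : ‖r z‖ ≠ 0 := norm_ne_zero_iff.mpr hrz
    have hfin : ‖z * deriv r z / r z‖ * ‖r z‖
        = ‖deriv r z‖ := by
      rw [norm_div, norm_mul, hz, one_mul, div_mul_cancel₀ _ habsr]
    calc (1 / 2) * (‖deriv B z‖ - (n : ℝ)
          + 2 * ((m : ℝ) + (s : ℝ) * k) / (1 + k)) * ‖r z‖
        = ((S - (n : ℝ)) / 2 + ((m : ℝ) + (s : ℝ) * k) / (1 + k)) * ‖r z‖ := by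
          rw [habsB']; ring
      _ ≤ (z * deriv r z / r z).re * ‖r z‖ :=
          mul_le_mul_of_nonneg_right hre (norm_nonneg _)
      _ ≤ ‖z * deriv r z / r z‖ * ‖r z‖ :=
          mul_le_mul_of_nonneg_right (Complex.re_le_norm _) (norm_nonneg _)
      _ = ‖deriv r z‖ := hfin
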